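/- Let Σ = Σ_1 ∪ ⋯ ∪ Σ_k be a partition of the alphabet into pairwise disjoint nonempty blocks and let L ⊆ Σ* be closed under the associated partial commutation. Then L = π_{Σ_1}(L) ⧢ π_{Σ_2}(L) ⧢ ⋯ ⧢ π_{Σ_k}(L) if and only if for every word w ∈ Σ*: w ∈ L ⟺ π_{Σ_i}(w) ∈ π_{Σ_i}(L) for all i ∈ {1,…,k}. -/

import Mathlib

/-- The Nerode right-congruence of a language `L`: `u ≡_L v` iff
for all words `x`, `u ++ x ∈ L ↔ v ++ x ∈ L`. -/
def NerodeEq {α : Type*} (L : Set (List α)) (u v : List α) : Prop :=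
  ∀ x : List α, u ++ x ∈ L ↔ v ++ x ∈ L

/-- The Nerode right-congruence as a setoid on words. -/
def nerodeSetoid {α : Type*} (L : Set (List α)) : Setoid (List α) where
  r := NerodeEq L
  iseqv := ⟨fun _ _ => Iff.rfl, fun h x => (h x).symm, fun h1 h2 x => (h1 x).trans (h2 x)⟩

/-- A language is regular iff its Nerode right-congruence has finitely many classes. -/
def RegularLang {α : Type*} (L : Set (List α)) : Prop :=
  Finite (Quotient (nerodeSetoid L))

/-- The state complexity of `L`: the number of Nerode right-congruence classes. -/
noncomputable def sc {α : Type*} (L : Set (List α)) : ℕ :=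
  Nat.card (Quotient (nerodeSetoid L))

/-- A language is commutative if membership only depends on the number of
occurrences of each letter. -/
def CommutativeLang {α : Type*} [DecidableEq α] (L : Set (List α)) : Prop :=
  ∀ u v : List α, (∀ x : α, u.count x = v.count x) → (u ∈ L ↔ v ∈ L)

/-- A (commutative) language has a product-form minimal automaton iff for all words
`u, v`: `u ≡_L v` holds if and only if `x^{|u|_x} ≡_L x^{|v|_x}` for every letter `x`. -/
def HasProductForm {α : Type*} [DecidableEq α] (L : Set (List α)) : Prop :=
  ∀ u v : List α,
    NerodeEq L u v ↔
      ∀ x : α, NerodeEq L (List.replicate (u.count x) x) (List.replicate (v.count x) x)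

/-- `IsShuffleOf u v w` holds iff `w` is an interleaving `x₁y₁x₂y₂⋯xₙyₙ`
with `u = x₁⋯xₙ` and `v = y₁⋯yₙ`. -/
inductive IsShuffleOf {α : Type*} : List α → List α → List α → Prop
  | nil : IsShuffleOf [] [] []
  | left {u v w : List α} {a : α} : IsShuffleOf u v w → IsShuffleOf (a :: u) v (a :: w)
  | right {u v w : List α} {a : α} : IsShuffleOf u v w → IsShuffleOf u (a :: v) (a :: w)

/-- The shuffle of two languages. -/
def shuffleLang {α : Type*} (U V : Set (List α)) : Set (List α) :=
  {w | ∃ u ∈ U, ∃ v ∈ V, IsShuffleOf u v w}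

/-- The iterated shuffle `L₁ ⧢ L₂ ⧢ ⋯ ⧢ Lₙ` of a list of languages
(`{ε}` is the neutral element of the shuffle). -/
def shuffles {α : Type*} (Ls : List (Set (List α))) : Set (List α) :=
  Ls.foldr shuffleLang {[]}

/-- With a partition of the alphabet encoded by a coloring `c : α → Fin k`
(block `Σ_i = c⁻¹(i)`), `projC c i w` is the projection `π_{Σ_i}(w)`. -/
def projC {α : Type*} {k : ℕ} (c : α → Fin k) (i : Fin k) (w : List α) : List α :=
  w.filter (fun x => c x = i)

/-- `L` is closed under the partial commutation associated with the partition
encoded by `c : α → Fin k`: letters in distinct blocks commute. -/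
def PartialCommClosed {α : Type*} {k : ℕ} (c : α → Fin k) (L : Set (List α)) : Prop :=
  ∀ x y : α, c x ≠ c y → ∀ u v : List α,
    (u ++ x :: y :: v ∈ L ↔ u ++ y :: x :: v ∈ L)

/-!
Membership in `π_{Σ_1}(L) ⧢ ⋯ ⧢ π_{Σ_k}(L)` is decided blockwise: a shuffle of two words over
disjoint alphabets is recovered from the interleaved word by projecting onto each alphabet, so
`w` lies in the iterated shuffle exactly when `π_{Σ_i}(w) ∈ π_{Σ_i}(L)` for every `i`. The
theorem is then extensionality of sets.
-/

namespace IsShuffleOf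

variable {α : Type*}

theorem eq_of_left_nil {v w : List α} (h : IsShuffleOf [] v w) : v = w := by
  generalize hu : ([] : List α) = u at h
  induction h with
  | nil => rfl
  | left _ _ => simp at hu
  | right _ ih => rw [ih hu]

theorem eq_of_right_nil {u w : List α} (h : IsShuffleOf u [] w) : u = w := by
  generalize hv : ([] : List α) = v at h
  induction h with
  | nil => rfl
  | left _ ih => rw [ih hv]
  | right _ _ => simp at hv

theorem filter (p : α → Bool) {u v w : List α} (h : IsShuffleOf u v w) :
    IsShuffleOf (u.filter p) (v.filter p) (w.filter p) := by
  induction h with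
  | nil => exact .nil
  | @left u v w a _ ih =>
    cases hp : p a <;> simp only [List.filter_cons, hp] <;> [exact ih; exact .left ih]
  | @right u v w a _ ih =>
    cases hp : p a <;> simp only [List.filter_cons, hp] <;> [exact ih; exact .right ih]

theorem filter_filter_not (p : α → Bool) (w : List α) :
    IsShuffleOf (w.filter p) (w.filter (fun a => !p a)) w := by
  induction w with
  | nil => exact .nil
  | cons a w ih =>
    cases hp : p a <;> simp only [List.filter_cons, hp, Bool.not_true, Bool.not_false]
    · exact .right ih
    · exact .left ih

end IsShuffleOf

theorem mem_shuffleLang_iff_filter {α : Type*} (p : α → Bool) {U V : Set (List α)}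
    (hU : ∀ u ∈ U, ∀ a ∈ u, p a) (hV : ∀ v ∈ V, ∀ a ∈ v, p a = false) (w : List α) :
    w ∈ shuffleLang U V ↔ w.filter p ∈ U ∧ w.filter (fun a => !p a) ∈ V := by
  constructor
  · rintro ⟨u, hu, v, hv, hw⟩
    have hpu : u.filter p = u := List.filter_eq_self.2 (hU u hu)
    have hpv : v.filter p = [] := List.filter_eq_nil_iff.2 fun a ha => by simp [hV v hv a ha]
    have hnu : u.filter (fun a => !p a) = [] :=
      List.filter_eq_nil_iff.2 fun a ha => by simp [hU u hu a ha]
    have hnv : v.filter (fun a => !p a) = v :=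
      List.filter_eq_self.2 fun a ha => by simp [hV v hv a ha]
    have hwp := hw.filter p
    have hwn := hw.filter (fun a => !p a)
    rw [hpu, hpv] at hwp
    rw [hnu, hnv] at hwn
    exact ⟨hwp.eq_of_right_nil ▸ hu, hwn.eq_of_left_nil ▸ hv⟩
  · rintro ⟨hu, hv⟩
    exact ⟨_, hu, _, hv, IsShuffleOf.filter_filter_not p w⟩

section Coloring

variable {α : Type*} {k : ℕ} (c : α → Fin k)

theorem projC_filter_ne {i j : Fin k} (h : j ≠ i) (w : List α) :
    projC c j (w.filter fun a => !decide (c a = i)) = projC c j w := by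
  simp only [projC, List.filter_filter]
  exact List.filter_congr fun a _ => by by_cases ha : c a = j <;> simp [ha, h]

theorem mem_shuffles_map_iff {F : Fin k → Set (List α)} (hF : ∀ i, ∀ u ∈ F i, ∀ a ∈ u, c a = i)
    {is : List (Fin k)} (hnd : is.Nodup) (w : List α) :
    w ∈ shuffles (is.map F) ↔ (∀ a ∈ w, c a ∈ is) ∧ ∀ i ∈ is, projC c i w ∈ F i := by
  induction is generalizing w with
  | nil => simp [shuffles, List.eq_nil_iff_forall_not_mem]
  | cons i is ih =>
    rw [List.nodup_cons] at hnd
    have hrest : ∀ v ∈ shuffles (is.map F), ∀ a ∈ v, decide (c a = i) = false :=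
      fun v hv a ha => by simpa using ne_of_mem_of_not_mem (((ih hnd.2 v).1 hv).1 a ha) hnd.1
    rw [shuffles, List.map_cons, List.foldr_cons, ← shuffles,
      mem_shuffleLang_iff_filter _ (fun u hu a ha => by simpa using hF i u hu a ha) hrest, ih hnd.2]
    have hcolors : (∀ a ∈ w.filter fun a => !decide (c a = i), c a ∈ is) ↔
        ∀ a ∈ w, c a ∈ i :: is := by
      simp only [List.mem_filter, List.mem_cons, Bool.not_eq_true', decide_eq_false_iff_not]
      exact forall_congr' fun a => by tauto
    have hblocks : (∀ j ∈ is, projC c j (w.filter fun a => !decide (c a = i)) ∈ F j) ↔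
        ∀ j ∈ is, projC c j w ∈ F j :=
      forall₂_congr fun j hj => by rw [projC_filter_ne c (ne_of_mem_of_not_mem hj hnd.1)]
    rw [hcolors, hblocks, List.forall_mem_cons]
    exact and_left_comm

theorem mem_shuffles_ofFn_iff {F : Fin k → Set (List α)} (hF : ∀ i, ∀ u ∈ F i, ∀ a ∈ u, c a = i)
    (w : List α) : w ∈ shuffles (List.ofFn F) ↔ ∀ i, projC c i w ∈ F i := by
  rw [List.ofFn_eq_map, mem_shuffles_map_iff c hF (List.nodup_finRange k)]
  simp only [List.mem_finRange, implies_true, forall_const, true_and]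

theorem color_eq_of_mem_projC_image (L : Set (List α)) (i : Fin k) :
    ∀ u ∈ projC c i '' L, ∀ a ∈ u, c a = i := by
  rintro u ⟨w, -, rfl⟩ a ha
  simpa [projC] using (List.mem_filter.1 ha).2

end Coloring

theorem stmt16_general {α : Type*} {k : ℕ} (c : α → Fin k)
    (L : Set (List α)) :
    L = shuffles (List.ofFn fun i : Fin k => projC c i '' L) ↔
      ∀ w : List α, w ∈ L ↔ ∀ i : Fin k, projC c i w ∈ projC c i '' L := by
  simp_rw [Set.ext_iff, mem_shuffles_ofFn_iff c (color_eq_of_mem_projC_image c L)]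

/-- If `L` is closed under the partial commutation associated with the partition
`Σ = Σ_1 ∪ ⋯ ∪ Σ_k`, then `L = π_{Σ_1}(L) ⧢ ⋯ ⧢ π_{Σ_k}(L)` iff for every word `w`:
`w ∈ L ⟺ π_{Σ_i}(w) ∈ π_{Σ_i}(L)` for all `i`. -/
theorem stmt16 {α : Type*} {k : ℕ} (c : α → Fin k) (hsurj : Function.Surjective c)
    (L : Set (List α)) (hL : PartialCommClosed c L) :
    L = shuffles (List.ofFn fun i : Fin k => projC c i '' L) ↔
      ∀ w : List α, w ∈ L ↔ ∀ i : Fin k, projC c i w ∈ projC c i '' L :=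
  stmt16_general c L
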